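/- arXiv:1203.5665 — 3 statements merged into one kernel-verified Lean document; each statement's English description precedes it below -/
import Mathlib

section
/- Let G be a group and H a finite normal subgroup such that G/H is free abelian of rank r, generated by the images of g₁,...,g_r ∈ G. Then there exists a positive integer s such that the subgroup G₁ generated by g₁^s,...,g_r^s is free abelian of rank r (the internal direct product of the cyclic groups ⟨g_i^s⟩) and has finite index in G. -/
/-!
Conjugation maps `G` to the finite group `MulAut H`, so the centralizer `C` of `H` has finite
index `m`. For `x ∈ C` and any `y`, the commutator `c = ⁅y, x⁆` lies in `H` (as `G ⧸ H` is
abelian) and commutes with `x`, so `y x^t y⁻¹ = (c x)^t = c^t x^t = x^t` for `t = |H|`. Hence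
every `(m t)`-th power is central, and the `gᵢ^s` commute for `s = m t`.

Then `a ↦ ∏ gᵢ^(s aᵢ)` is a homomorphism `ℤ^r → G` onto `G₁` whose composite with
`G → G ⧸ H ≅ ℤ^r` is multiplication by `s`. So it is injective, and the image of `G₁` in `ℤ^r`
has index `s^r`; thus `G₁ ⊔ H` has finite index in `G`, and since `H` is finite, so does `G₁`.
-/

open Subgroup Multiplicative
open scoped commutatorElement Pointwise

section FiniteByAbelian

variable {G : Type*} [Group G]

theorem commute_pow_of_conj_eq_mul {x y c : G} {n : ℕ} (h : y * x * y⁻¹ = c * x)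
    (hcx : Commute c x) (hc : c ^ n = 1) : Commute y (x ^ n) :=
  mul_inv_eq_iff_eq_mul.mp <| by rw [← conj_pow, h, hcx.mul_pow, hc, one_mul]

theorem MulAut.ker_conjNormal (N : Subgroup G) [N.Normal] :
    (MulAut.conjNormal : G →* MulAut N).ker = centralizer (N : Set G) := by
  ext x
  simp only [MonoidHom.mem_ker, mem_centralizer_iff, MulEquiv.ext_iff, Subtype.ext_iff,
    MulAut.conjNormal_apply, MulAut.one_apply, Subtype.forall, SetLike.mem_coe]
  refine forall₂_congr fun c _ => ?_
  rw [mul_inv_eq_iff_eq_mul, eq_comm]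

instance Subgroup.finiteIndex_centralizer (N : Subgroup G) [N.Normal] [Finite N] :
    (centralizer (N : Set G)).FiniteIndex :=
  MulAut.ker_conjNormal N ▸ inferInstance

theorem commute_pow_card_of_mem_centralizer {N : Subgroup G} [Finite N]
    (hN : ∀ a b : G, ⁅a, b⁆ ∈ N) {x : G} (hx : x ∈ centralizer (N : Set G)) (y : G) :
    Commute y (x ^ Nat.card N) := by
  have hc : ⁅y, x⁆ ∈ N := hN y x
  refine commute_pow_of_conj_eq_mul (c := ⁅y, x⁆) (by group) (hx _ hc) ?_
  exact congrArg Subtype.val (pow_card_eq_one' (x := (⟨_, hc⟩ : N)))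

theorem exists_pow_mem_center (N : Subgroup G) [N.Normal] [Finite N]
    (hN : ∀ a b : G, ⁅a, b⁆ ∈ N) : ∃ s, 0 < s ∧ ∀ x : G, x ^ s ∈ center G := by
  refine ⟨(centralizer (N : Set G)).index * Nat.card N,
    Nat.mul_pos (Nat.pos_of_ne_zero FiniteIndex.index_ne_zero) Nat.card_pos, fun x => ?_⟩
  rw [mem_center_iff, pow_mul]
  exact commute_pow_card_of_mem_centralizer hN ((centralizer (N : Set G)).pow_index_mem x)

theorem Subgroup.finiteIndex_of_finiteIndex_sup (K N : Subgroup G) [N.Normal] [Finite N]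
    [(K ⊔ N).FiniteIndex] : K.FiniteIndex := by
  suffices Finite (G ⧸ K) from finiteIndex_of_finite_quotient
  -- `K ⊔ N = N * K`, so each coset of `K` in `q.out * (K ⊔ N)` has the form `q.out * n * K`.
  refine Finite.of_surjective (fun p : (G ⧸ (K ⊔ N)) × N => ((p.1.out * p.2 : G) : G ⧸ K)) ?_
  refine fun q => QuotientGroup.induction_on q fun g => ?_
  obtain ⟨⟨m, hm⟩, hout⟩ := QuotientGroup.mk_out_eq_mul (K ⊔ N) g
  have : m⁻¹ ∈ (N : Set G) * (K : Set G) := by rw [← normal_mul, sup_comm]; exact inv_mem hm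
  obtain ⟨n, hn, k, hk : k ∈ K, hnk : n * k = m⁻¹⟩ := this
  refine ⟨(g, ⟨n, hn⟩), QuotientGroup.eq.mpr ?_⟩
  simp only [hout]
  rw [inv_eq_iff_eq_inv.mp hnk.symm]
  convert hk using 1
  group

theorem Subgroup.finiteIndex_of_finiteIndex_map {G' : Type*} [Group G'] {f : G →* G'}
    [Finite f.ker] (K : Subgroup G) [(K.map f).FiniteIndex] : K.FiniteIndex := by
  have : (K ⊔ f.ker).FiniteIndex :=
    ⟨left_ne_zero_of_mul (K.index_map f ▸ FiniteIndex.index_ne_zero)⟩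
  exact K.finiteIndex_of_finiteIndex_sup f.ker

end FiniteByAbelian

theorem index_range_powMonoidHom {ι : Type*} [Fintype ι] (s : ℕ) :
    (powMonoidHom s : Multiplicative (ι → ℤ) →* _).range.index = s ^ Fintype.card ι := by
  have : (powMonoidHom s : Multiplicative (ι → ℤ) →* _).range =
      AddSubgroup.toSubgroup (nsmulAddMonoidHom (α := ι → ℤ) s).range := rfl
  rw [this, AddSubgroup.index_toSubgroup, AddSubgroup.index_range_nsmul,
    Module.finrank_fintype_fun_eq_card]

section CommutingFamily

variable {G : Type*} [Group G] {ι : Type*} [Fintype ι] (x : ι → G)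
  (hx : Pairwise fun i j => Commute (x i) (x j))

noncomputable def zpowProdHom : (ι → Multiplicative ℤ) →* G :=
  MonoidHom.noncommPiCoprod (fun i => zpowersHom G (x i))
    fun _ _ hij _ _ => (hx hij).zpow_zpow _ _

theorem range_zpowProdHom : (zpowProdHom x hx).range = closure (Set.range x) := by
  refine (MonoidHom.noncommPiCoprod_range _).trans <|
    le_antisymm (iSup_le fun i => ?_) ((closure_le _).mpr ?_)
  · rw [range_zpowersHom, zpowers_le]
    exact subset_closure ⟨i, rfl⟩
  · rintro _ ⟨i, rfl⟩
    exact le_iSup (fun i => (zpowersHom G (x i)).range) i ⟨ofAdd 1, by simp⟩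

theorem zpowProdHom_mulSingle [DecidableEq ι] (i : ι) (n : Multiplicative ℤ) :
    zpowProdHom x hx (Pi.mulSingle i n) = x i ^ n.toAdd :=
  MonoidHom.noncommPiCoprod_mulSingle _ _ _

variable [DecidableEq ι]

theorem comp_zpowProdHom_eq_pow (f : G →* Multiplicative (ι → ℤ)) {s : ℕ}
    (hf : ∀ i, f (x i) = ofAdd (Pi.single i (s : ℤ))) :
    f.comp (zpowProdHom x hx) =
      (powMonoidHom s).comp (MulEquiv.funMultiplicative ι ℤ).symm.toMonoidHom := by
  refine MonoidHom.functions_ext' _ _ _ fun i => MonoidHom.ext_mint ?_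
  simp only [MonoidHom.coe_comp, MonoidHom.coe_mulSingle, Function.comp_apply,
    zpowProdHom_mulSingle, toAdd_ofAdd, zpow_ofNat, pow_one, hf, MulEquiv.toMonoidHom_eq_coe,
    MonoidHom.coe_coe, MulEquiv.piMultiplicative_symm_apply, powMonoidHom_apply]
  rw [← ofAdd_nsmul]
  congr 1
  ext j
  by_cases h : j = i <;> simp [h]

theorem injective_zpowProdHom (f : G →* Multiplicative (ι → ℤ)) {s : ℕ} (hs : s ≠ 0)
    (hf : ∀ i, f (x i) = ofAdd (Pi.single i (s : ℤ))) :
    Function.Injective (zpowProdHom x hx) := by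
  have : Function.Injective (f.comp (zpowProdHom x hx)) := by
    rw [comp_zpowProdHom_eq_pow x hx f hf]
    exact (pow_left_injective hs).comp (MulEquiv.injective _)
  exact Function.Injective.of_comp (f := f) this

theorem finiteIndex_closure (hx : Pairwise fun i j => Commute (x i) (x j))
    (f : G →* Multiplicative (ι → ℤ)) [Finite f.ker] {s : ℕ}
    (hs : s ≠ 0) (hf : ∀ i, f (x i) = ofAdd (Pi.single i (s : ℤ))) :
    (closure (Set.range x)).FiniteIndex := by
  have : ((closure (Set.range x)).map f).FiniteIndex := by
    rw [← range_zpowProdHom x hx, ← MonoidHom.range_comp, comp_zpowProdHom_eq_pow x hx f hf,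
      MonoidHom.range_comp, MonoidHom.range_eq_top_of_surjective _ (MulEquiv.surjective _),
      ← MonoidHom.range_eq_map]
    exact ⟨by rw [index_range_powMonoidHom]; exact pow_ne_zero _ hs⟩
  exact (closure (Set.range x)).finiteIndex_of_finiteIndex_map (f := f)

end CommutingFamily

/-- Lemma 2.4(1): if `H ◁ G` is finite and `G/H` is free abelian of rank `r`
with free basis the images of `g₁, …, g_r`, then for some `s > 0` the subgroup
generated by the `gᵢ^s` is free abelian of rank `r` (the `gᵢ^s` pairwise commute
and the induced map from `ℤ^r` is an isomorphism onto it) and has finite index in `G`. -/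
theorem stmt0 {G : Type*} [Group G] (H : Subgroup G) [H.Normal] [Finite H]
    (r : ℕ) (g : Fin r → G)
    (e : G ⧸ H ≃* Multiplicative (Fin r → ℤ))
    (hbasis : ∀ i, e (QuotientGroup.mk (g i)) = Multiplicative.ofAdd (Pi.single i 1)) :
    ∃ s : ℕ, 0 < s ∧
      (∀ i j, Commute (g i ^ s) (g j ^ s)) ∧
      (Subgroup.closure (Set.range fun i => g i ^ s)).FiniteIndex ∧
      Nonempty ((Subgroup.closure (Set.range fun i => g i ^ s)) ≃*
        Multiplicative (Fin r → ℤ)) := by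
  set π : G →* Multiplicative (Fin r → ℤ) := e.toMonoidHom.comp (QuotientGroup.mk' H)
  have hker : π.ker = H := by simp [π]
  have : Finite π.ker := hker ▸ ‹Finite H›
  obtain ⟨s, hs, hcentral⟩ := exists_pow_mem_center H fun a b => by
    rw [← hker, MonoidHom.mem_ker, map_commutatorElement, commutatorElement_eq_one_iff_commute]
    exact Commute.all _ _
  have hcomm : ∀ i j, Commute (g i ^ s) (g j ^ s) :=
    fun i j => mem_center_iff.mp (hcentral (g j)) (g i ^ s)
  have hπ : ∀ i, π (g i ^ s) = ofAdd (Pi.single i (s : ℤ)) := fun i => by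
    simp [π, hbasis, ← ofAdd_nsmul, ← Pi.single_smul]
  have hx : Pairwise fun i j => Commute (g i ^ s) (g j ^ s) := fun i j _ => hcomm i j
  refine ⟨s, hs, hcomm, finiteIndex_closure _ hx π hs.ne' hπ, ⟨?_⟩⟩
  exact (MulEquiv.subgroupCongr (range_zpowProdHom _ hx).symm).trans <|
    (MonoidHom.ofInjective (injective_zpowProdHom _ hx π hs.ne' hπ)).symm.trans
      (MulEquiv.funMultiplicative (Fin r) ℤ).symm
end

section
/- Let G be a group and H a finite normal subgroup of G such that the commutator subgroup [G,G] is contained in H. Then for any two elements g₁, g₂ ∈ G there is a positive integer s such that g₁^s and g₂^s commute. -/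
/-!
The commutators `⁅g₁ ^ t, g₂⁆`, `t : ℕ`, all lie in the finite group `H`, so two of them coincide,
`⁅g₁ ^ a, g₂⁆ = ⁅g₁ ^ b, g₂⁆` with `b < a`. Then `g₁ ^ a` and `g₁ ^ b` conjugate `g₂` to the same
element, so `g₁ ^ (a - b)` commutes with `g₂`, and hence with `g₂ ^ (a - b)`.
-/

open scoped commutatorElement

section

variable {G : Type*} [Group G]

theorem commute_inv_mul_of_commutatorElement_eq {x y g : G} (h : ⁅x, g⁆ = ⁅y, g⁆) :
    Commute (y⁻¹ * x) g := by
  have hconj : x * g * x⁻¹ = y * g * y⁻¹ := by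
    simpa only [commutatorElement_def] using mul_right_cancel h
  calc y⁻¹ * x * g = y⁻¹ * (x * g * x⁻¹) * x := by group
    _ = y⁻¹ * (y * g * y⁻¹) * x := by rw [hconj]
    _ = g * (y⁻¹ * x) := by group

theorem exists_pos_pow_commute_of_commutatorElement_mem {s : Set G} (hs : s.Finite) {g h : G}
    (hmem : ∀ t : ℕ, ⁅g ^ t, h⁆ ∈ s) : ∃ n : ℕ, 0 < n ∧ Commute (g ^ n) h := by
  obtain ⟨b, a, hba, heq⟩ := hs.exists_lt_map_eq_of_forall_mem hmem
  refine ⟨a - b, Nat.sub_pos_of_lt hba, ?_⟩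
  have hpow : g ^ (a - b) = (g ^ b)⁻¹ * g ^ a := by
    rw [eq_inv_mul_iff_mul_eq, ← pow_add, Nat.add_sub_cancel' hba.le]
  rw [hpow]
  exact commute_inv_mul_of_commutatorElement_eq heq.symm

end

theorem stmt2_general {G : Type*} [Group G] (H : Subgroup G) [Finite H]
    (hcomm : ⁅(⊤ : Subgroup G), (⊤ : Subgroup G)⁆ ≤ H) (g₁ g₂ : G) :
    ∃ s : ℕ, 0 < s ∧ Commute (g₁ ^ s) (g₂ ^ s) := by
  have hmem : ∀ t : ℕ, ⁅g₁ ^ t, g₂⁆ ∈ (H : Set G) := fun t =>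
    hcomm (Subgroup.commutator_mem_commutator (Subgroup.mem_top _) (Subgroup.mem_top _))
  obtain ⟨s, hs, hcomm_s⟩ := exists_pos_pow_commute_of_commutatorElement_mem (Set.toFinite _) hmem
  exact ⟨s, hs, hcomm_s.pow_right s⟩

/-- Key step of Lemma 2.4: if `H ◁ G` is finite and `[G,G] ≤ H`, then for any
`g₁, g₂ ∈ G` some positive common power makes them commute. -/
theorem stmt2 {G : Type*} [Group G] (H : Subgroup G) [H.Normal] [Finite H]
    (hcomm : ⁅(⊤ : Subgroup G), (⊤ : Subgroup G)⁆ ≤ H) (g₁ g₂ : G) :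
    ∃ s : ℕ, 0 < s ∧ Commute (g₁ ^ s) (g₂ ^ s) :=
  stmt2_general H hcomm g₁ g₂
end

section
/- Let G be a subgroup of GL_n(ℂ) that is a torsion group of bounded exponent. Then G is finite. -/
open Matrix

open Polynomial

lemma auxRootsFinite (N : ℕ) (hN : 0 < N) : {z : ℂ | z ^ N = 1}.Finite := by
  have hp : (X ^ N - C 1 : ℂ[X]) ≠ 0 := by
    intro h
    have h2 := congrArg natDegree h
    rw [natDegree_X_pow_sub_C] at h2
    simp at h2
    omega
  refine (Polynomial.finite_setOf_isRoot hp).subset ?_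
  intro z hz
  simp only [Set.mem_setOf_eq, IsRoot, eval_sub, eval_pow, eval_X, eval_C]
  rw [Set.mem_setOf_eq.mp hz]
  ring

def auxTset (n N : ℕ) : Set ℂ := (fun f : Fin n → ℂ => ∑ i, f i) '' {f | ∀ i, f i ^ N = 1}

lemma auxTsetFinite (n N : ℕ) (hN : 0 < N) : (auxTset n N).Finite := by
  apply Set.Finite.image
  have h : {f : Fin n → ℂ | ∀ i, f i ^ N = 1} = Set.pi Set.univ (fun _ => {z | z ^ N = 1}) := by
    ext f; simp [Set.mem_pi]
  rw [h]
  exact Set.Finite.pi fun _ => auxRootsFinite N hN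

lemma auxRootPow (n N : ℕ) (M : Matrix (Fin n) (Fin n) ℂ)
    (hM : M ^ N = 1) (μ : ℂ) (hμ : μ ∈ M.charpoly.roots) : μ ^ N = 1 := by
  classical
  have hroot : M.charpoly.IsRoot μ := isRoot_of_mem_roots hμ
  have hmap : (charmatrix M).map (Polynomial.evalRingHom μ) = μ • (1 : Matrix (Fin n) (Fin n) ℂ) - M := by
    ext i j
    by_cases h : i = j
    · subst h
      simp [charmatrix_apply_eq, Matrix.one_apply]
    · simp [charmatrix_apply_ne _ _ _ h, Matrix.one_apply, h]
  have hdet : (μ • (1 : Matrix (Fin n) (Fin n) ℂ) - M).det = 0 := by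
    rw [← hmap]
    have h2 := RingHom.map_det (Polynomial.evalRingHom μ) M.charmatrix
    rw [RingHom.mapMatrix_apply] at h2
    rw [← h2]
    simpa [Matrix.charpoly] using hroot
  obtain ⟨v, hv0, hv⟩ := Matrix.exists_mulVec_eq_zero_iff.mpr hdet
  have hMv : M *ᵥ v = μ • v := by
    have h3 : (μ • (1 : Matrix (Fin n) (Fin n) ℂ)) *ᵥ v - M *ᵥ v = 0 := by
      rw [← Matrix.sub_mulVec]; exact hv
    have h4 : (μ • (1 : Matrix (Fin n) (Fin n) ℂ)) *ᵥ v = μ • v := by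
      rw [Matrix.smul_mulVec, Matrix.one_mulVec]
    rw [h4] at h3
    exact (sub_eq_zero.mp h3).symm
  have hpow : ∀ k : ℕ, (M ^ k) *ᵥ v = μ ^ k • v := by
    intro k
    induction k with
    | zero => simp
    | succ k ih =>
      rw [pow_succ', ← Matrix.mulVec_mulVec, ih, Matrix.mulVec_smul, hMv, smul_smul, ← pow_succ]
  have h5 := hpow N
  rw [hM, Matrix.one_mulVec] at h5
  have h6 : (μ ^ N - 1) • v = 0 := by
    rw [sub_smul, one_smul, ← h5, sub_self]
  rcases smul_eq_zero.mp h6 with h | h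
  · exact sub_eq_zero.mp h
  · exact absurd h hv0

lemma auxTraceMem (n N : ℕ) (hN : 0 < N) (M : Matrix (Fin n) (Fin n) ℂ)
    (hM : M ^ N = 1) : M.trace ∈ auxTset n N := by
  classical
  have htr := Matrix.trace_eq_sum_roots_charpoly M
  have hne : M.charpoly ≠ 0 := M.charpoly_monic.ne_zero
  have hcard : (M.charpoly.roots).card = n := by
    rw [(Polynomial.splits_iff_card_roots).mp (IsAlgClosed.splits M.charpoly)]
    simp
  set l : List ℂ := M.charpoly.roots.toList with hl
  have hlen : l.length = n := by
    rw [hl, Multiset.length_toList, hcard]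
  refine ⟨fun i => l.get (Fin.cast hlen.symm i), ?_, ?_⟩
  · intro i
    apply auxRootPow n N M hM
    rw [← Multiset.mem_toList]
    apply List.get_mem
  · show ∑ i : Fin n, l.get (Fin.cast hlen.symm i) = M.trace
    have h1 : ∑ i : Fin n, l.get (Fin.cast hlen.symm i) = ∑ j : Fin l.length, l.get j :=
      Fintype.sum_equiv (finCongr hlen.symm) _ _ (fun i => rfl)
    rw [h1]
    have h2 : ∑ j : Fin l.length, l.get j = l.sum := by
      conv_rhs => rw [← List.ofFn_get l]
      rw [List.sum_ofFn]
    rw [h2, hl, Multiset.sum_toList, htr]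

lemma auxEqOne (n N : ℕ) (hN : 0 < N) (M : Matrix (Fin n) (Fin n) ℂ)
    (hM : M ^ N = 1) (htr : ∀ k : ℕ, (M ^ k).trace = (n : ℂ)) : M = 1 := by
  classical
  have hNe : (N : ℂ) ≠ 0 := Nat.cast_ne_zero.mpr hN.ne'
  set S : Matrix (Fin n) (Fin n) ℂ := ∑ k ∈ Finset.range N, M ^ k with hSdef
  have hMS : M * S = S := by
    rw [hSdef, Finset.mul_sum]
    simp_rw [← pow_succ']
    have e1 := Finset.sum_range_succ' (fun k => M ^ k) N
    have e2 := Finset.sum_range_succ (fun k => M ^ k) N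
    simp only [hM, pow_zero] at e1 e2
    have := e1.symm.trans e2
    exact add_right_cancel this
  have hjS : ∀ j : ℕ, M ^ j * S = S := by
    intro j
    induction j with
    | zero => simp
    | succ j ih => rw [pow_succ', mul_assoc, ih, hMS]
  set B : Matrix (Fin n) (Fin n) ℂ := (N : ℂ)⁻¹ • S with hBdef
  have hBB : B * B = B := by
    have hSS : S * S = (N : ℂ) • S := by
      calc S * S = ∑ k ∈ Finset.range N, M ^ k * S := by rw [hSdef, Finset.sum_mul]
        _ = ∑ k ∈ Finset.range N, S := Finset.sum_congr rfl (fun k _ => hjS k)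
        _ = (N : ℕ) • S := by rw [Finset.sum_const, Finset.card_range]
        _ = (N : ℂ) • S := (Nat.cast_smul_eq_nsmul ℂ N S).symm
    rw [hBdef, Matrix.smul_mul, Matrix.mul_smul, smul_smul, hSS, smul_smul]
    congr 1
    field_simp
  have hMB : M * B = B := by
    rw [hBdef, Matrix.mul_smul, hMS]
  have hBtr : B.trace = (n : ℂ) := by
    rw [hBdef, Matrix.trace_smul, hSdef, Matrix.trace_sum]
    simp_rw [htr]
    rw [Finset.sum_const, Finset.card_range, nsmul_eq_mul]
    rw [smul_eq_mul, ← mul_assoc, inv_mul_cancel₀ hNe, one_mul]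
  -- pass to linear maps
  set E := Matrix.toLin' B with hEdef
  have hEE : E ∘ₗ E = E := by
    rw [hEdef, ← Matrix.toLin'_mul, hBB]
  have hproj : LinearMap.IsProj (LinearMap.range E) E := by
    refine ⟨fun x => LinearMap.mem_range_self E x, ?_⟩
    rintro x ⟨y, rfl⟩
    exact congrFun (congrArg (fun f => f.toFun) hEE) y
  have htrE : LinearMap.trace ℂ (Fin n → ℂ) E = (Module.finrank ℂ (LinearMap.range E) : ℂ) :=
    hproj.trace
  have htrE' : LinearMap.trace ℂ (Fin n → ℂ) E = B.trace := by
    rw [LinearMap.trace_eq_matrix_trace ℂ (Pi.basisFun ℂ (Fin n)) E,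
      LinearMap.toMatrix_eq_toMatrix', hEdef, LinearMap.toMatrix'_toLin']
  have hfr : Module.finrank ℂ ↥(LinearMap.range E) = n := by
    have : (Module.finrank ℂ ↥(LinearMap.range E) : ℂ) = (n : ℂ) := by
      rw [← htrE, htrE', hBtr]
    exact_mod_cast this
  have htop : LinearMap.range E = ⊤ := by
    apply Submodule.eq_top_of_finrank_eq
    rw [hfr]
    simp [Module.finrank_fin_fun]
  have hEid : E = LinearMap.id :=
    LinearMap.ext fun x => hproj.map_id x (htop ▸ Submodule.mem_top)
  have hB1 : B = 1 := by
    apply Matrix.toLin'.injective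
    rw [← hEdef, hEid, Matrix.toLin'_one]
  rw [hB1] at hMB
  simpa using hMB

/-- Burnside's theorem: a torsion subgroup of `GL_n(ℂ)` of bounded exponent
is finite. -/
theorem stmt6 (n : ℕ) (G : Subgroup (GL (Fin n) ℂ))
    (N : ℕ) (hN : 0 < N) (hexp : ∀ g ∈ G, g ^ N = 1) :
    Finite G := by
  classical
  set S : Set (Matrix (Fin n) (Fin n) ℂ) :=
    (fun g : GL (Fin n) ℂ => (g : Matrix (Fin n) (Fin n) ℂ)) '' (G : Set (GL (Fin n) ℂ)) with hSdef
  obtain ⟨t, hts, hspan, hli⟩ := exists_linearIndependent ℂ S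
  haveI : Finite t := hli.finite
  haveI : Finite (auxTset n N) := (auxTsetFinite n N hN).to_subtype
  have hpow : ∀ g : GL (Fin n) ℂ, g ∈ G → ((g : Matrix (Fin n) (Fin n) ℂ)) ^ N = 1 := by
    intro g hg
    have h1 : ((g ^ N : GL (Fin n) ℂ) : Matrix (Fin n) (Fin n) ℂ) = 1 := by
      rw [hexp g hg]; rfl
    rw [← Units.val_pow_eq_pow_val]
    exact h1
  have hmemT : ∀ (g : G) (b : t), Matrix.trace ((g : GL (Fin n) ℂ).val * (b : Matrix (Fin n) (Fin n) ℂ)) ∈ auxTset n N := by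
    rintro g ⟨b, hb⟩
    obtain ⟨h', hh', rfl⟩ := hts hb
    have hmem : (g : GL (Fin n) ℂ) * h' ∈ G := mul_mem g.2 hh'
    have he : (g : GL (Fin n) ℂ).val * (h' : Matrix (Fin n) (Fin n) ℂ) =
        (((g : GL (Fin n) ℂ) * h' : GL (Fin n) ℂ) : Matrix (Fin n) (Fin n) ℂ) := rfl
    rw [he]
    exact auxTraceMem n N hN _ (hpow _ hmem)
  let Φ : G → (t → auxTset n N) := fun g b => ⟨_, hmemT g b⟩
  have hinj : Function.Injective Φ := by
    intro g h hgh
    have h0 : ∀ b : t, Matrix.trace ((g : GL (Fin n) ℂ).val * (b : Matrix (Fin n) (Fin n) ℂ)) =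
        Matrix.trace ((h : GL (Fin n) ℂ).val * (b : Matrix (Fin n) (Fin n) ℂ)) := by
      intro b
      exact congrArg Subtype.val (congrFun hgh b)
    have h1 : ∀ x ∈ Submodule.span ℂ S,
        Matrix.trace ((g : GL (Fin n) ℂ).val * x) = Matrix.trace ((h : GL (Fin n) ℂ).val * x) := by
      rw [← hspan]
      intro x hx
      induction hx using Submodule.span_induction with
      | mem x hxt => exact h0 ⟨x, hxt⟩
      | zero => simp
      | add x y _ _ hx hy => simp [mul_add, Matrix.trace_add, hx, hy]
      | smul c x _ hx => simp [Matrix.mul_smul, Matrix.trace_smul, hx]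
    set u : GL (Fin n) ℂ := (g : GL (Fin n) ℂ) * (h : GL (Fin n) ℂ)⁻¹ with hudef
    have hu : u ∈ G := mul_mem g.2 (inv_mem h.2)
    have htr : ∀ k : ℕ, Matrix.trace ((u : Matrix (Fin n) (Fin n) ℂ) ^ k) = (n : ℂ) := by
      intro k
      induction k with
      | zero => simp [Matrix.trace_one]
      | succ k ih =>
        have hx : ((h : GL (Fin n) ℂ)⁻¹ * u ^ k : GL (Fin n) ℂ).val ∈ S := by
          exact ⟨_, mul_mem (inv_mem h.2) (pow_mem hu k), rfl⟩
        have hx' : ((h : GL (Fin n) ℂ)⁻¹ * u ^ k : GL (Fin n) ℂ).val ∈ Submodule.span ℂ S :=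
          Submodule.subset_span hx
        have e1 : (u : Matrix (Fin n) (Fin n) ℂ) ^ (k + 1) =
            (g : GL (Fin n) ℂ).val * ((h : GL (Fin n) ℂ)⁻¹ * u ^ k : GL (Fin n) ℂ).val := by
          rw [← Units.val_pow_eq_pow_val, ← Units.val_mul]
          congr 1
          rw [hudef]
          group
        have e2 : (h : GL (Fin n) ℂ).val * ((h : GL (Fin n) ℂ)⁻¹ * u ^ k : GL (Fin n) ℂ).val =
            (u : Matrix (Fin n) (Fin n) ℂ) ^ k := by
          rw [← Units.val_mul, ← Units.val_pow_eq_pow_val]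
          congr 1
          group
        rw [e1, h1 _ hx', e2, ih]
    have hu1 : u = 1 := by
      apply Units.ext
      exact auxEqOne n N hN _ (hpow u hu) htr
    have : (g : GL (Fin n) ℂ) = (h : GL (Fin n) ℂ) := by
      have := congrArg (fun x => x * (h : GL (Fin n) ℂ)) hu1
      simpa [hudef, mul_assoc] using this
    exact Subtype.ext this
  exact Finite.of_injective Φ hinj
end
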